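/- Every countable partition of a topological space into locally closed sets admits a refinement into countably many locally closed cells that is linearly separated: there is a countable partition Π' refining Π, with each cell locally closed, and a linear order ⊴ on Π' such that every cell is disjoint from the closure of the union of all strictly ⊴-smaller cells. -/

import Mathlib

/-!
Grow a binary tree of locally closed regions. The root region is `X`; a node of depth `n` with
region `R` carries the cell `C = A n ∩ R`, and has the *closed* child `(R ∩ closure C) \ C` and the
*open* child `R \ closure C`. A point of `A n` lies in some cell of depth at most `n`, and cells of
equal depth lie in disjoint regions, so the cells partition `X` and refine `A`.

Order the nodes lexicographically from the root, putting the closed subtree of a node before the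
node and the node before its open subtree. A cell before `C` then lies either in the closed subtree
of `C`, hence in `closure C \ C`, or in the closure of the cell of an ancestor that `C` descends
from through its open child. Both are closed sets missing `C`.
-/

open Set Function

lemma IsLocallyClosed.isClosed_closure_sdiff {X : Type*} [TopologicalSpace X] {s : Set X}
    (hs : IsLocallyClosed s) : IsClosed (closure s \ s) :=
  isOpen_compl_iff.1 hs.isOpen_coborder

namespace LinearSeparation

def branchCode (b : Bool) : ℕ := cond b 0 2

/-- Keys of root-first paths: closed child `↦ 0`, end of path `↦ 1`, open child `↦ 2`. -/
def pathKey (σ : List Bool) : List ℕ := σ.map branchCode ++ [1]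

@[simp] lemma pathKey_nil : pathKey [] = [1] := rfl

@[simp] lemma pathKey_cons (b : Bool) (σ : List Bool) :
    pathKey (b :: σ) = branchCode b :: pathKey σ := rfl

lemma pathKey_injective : Injective pathKey := by
  intro σ τ h
  refine List.map_injective_iff.2 (fun a b hab => ?_) (List.append_cancel_right h)
  cases a <;> cases b <;> simp_all [branchCode]

lemma pathKey_lt_one_iff {τ : List Bool} : pathKey τ < [1] ↔ ∃ υ, τ = true :: υ := by
  rcases τ with _ | ⟨_ | _, υ⟩ <;> simp [List.cons_lt_cons_iff, branchCode]

lemma pathKey_lt_append_false (σ : List Bool) : ∀ τ, pathKey τ < pathKey (σ ++ [false]) →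
    (∃ υ, τ = σ ++ false :: true :: υ) ∨ τ = σ ∨ pathKey τ < pathKey σ := by
  induction σ with
  | nil =>
    rintro (_ | ⟨_ | _, υ⟩) <;> simp [List.cons_lt_cons_iff, branchCode, pathKey_lt_one_iff]
  | cons c ρ ih =>
    rintro (_ | ⟨d, υ⟩)
    · cases c <;> simp [List.cons_lt_cons_iff, branchCode]
    · cases c <;> cases d <;> simp [List.cons_lt_cons_iff, branchCode] <;> exact ih υ

lemma pathKey_lt_append_true (σ : List Bool) : ∀ τ, pathKey τ < pathKey (σ ++ [true]) →
    (∃ υ, τ = σ ++ true :: true :: υ) ∨ pathKey τ < pathKey σ := by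
  induction σ with
  | nil =>
    rintro (_ | ⟨_ | _, υ⟩) <;> simp [List.cons_lt_cons_iff, branchCode, pathKey_lt_one_iff]
  | cons c ρ ih =>
    rintro (_ | ⟨d, υ⟩)
    · cases c <;> simp [List.cons_lt_cons_iff, branchCode]
    · cases c <;> cases d <;> simp [List.cons_lt_cons_iff, branchCode] <;> intro h <;>
        rcases ih υ h with ⟨υ', rfl⟩ | h' <;> simp [*]

lemma not_pathKey_append_false_lt (σ υ : List Bool) : ¬ pathKey (σ ++ false :: υ) < pathKey σ := by
  induction σ with
  | nil => simp [List.cons_lt_cons_iff, branchCode]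
  | cons c ρ ih => cases c <;> simp [branchCode, ih]

def nodeKey (s : List Bool) : List ℕ := pathKey s.reverse

lemma nodeKey_injective : Injective nodeKey :=
  pathKey_injective.comp List.reverse_injective

lemma exists_eq_append_true_of_nodeKey_lt_nil {t : List Bool} (h : nodeKey t < nodeKey []) :
    ∃ u, t = u ++ [true] := by
  obtain ⟨υ, hυ⟩ := pathKey_lt_one_iff.1 h
  exact ⟨υ.reverse, by simpa using congrArg List.reverse hυ⟩

lemma nodeKey_lt_false_cons {t q : List Bool} (h : nodeKey t < nodeKey (false :: q)) :
    (∃ u, t = u ++ true :: false :: q) ∨ t = q ∨ nodeKey t < nodeKey q := by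
  rcases pathKey_lt_append_false q.reverse t.reverse (by simpa [nodeKey] using h)
    with ⟨υ, hυ⟩ | hq | hlt
  · exact Or.inl ⟨υ.reverse, by simpa using congrArg List.reverse hυ⟩
  · exact Or.inr (Or.inl (List.reverse_injective hq))
  · exact Or.inr (Or.inr hlt)

lemma nodeKey_lt_true_cons {t q : List Bool} (h : nodeKey t < nodeKey (true :: q)) :
    (∃ u, t = u ++ true :: true :: q) ∨ nodeKey t < nodeKey q := by
  rcases pathKey_lt_append_true q.reverse t.reverse (by simpa [nodeKey] using h)
    with ⟨υ, hυ⟩ | hlt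
  · exact Or.inl ⟨υ.reverse, by simpa using congrArg List.reverse hυ⟩
  · exact Or.inr hlt

lemma not_nodeKey_append_false_cons_lt (u s : List Bool) :
    ¬ nodeKey (u ++ false :: s) < nodeKey s := by
  simpa [nodeKey] using not_pathKey_append_false_lt s.reverse u.reverse

section Tree

variable {X : Type*} [TopologicalSpace X] (A : ℕ → Set X)

/-- Nodes are leaf-first lists (the head is the last branching, `true` the closed child), so the
depth of a node is its length. -/
def region : List Bool → Set X
  | [] => univ
  | true :: s => (region s ∩ closure (A s.length ∩ region s)) \ (A s.length ∩ region s)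
  | false :: s => region s \ closure (A s.length ∩ region s)

def cell (s : List Bool) : Set X := A s.length ∩ region A s

lemma region_true_cons (s : List Bool) :
    region A (true :: s) = (region A s ∩ closure (cell A s)) \ cell A s := rfl

lemma region_false_cons (s : List Bool) :
    region A (false :: s) = region A s \ closure (cell A s) := rfl

lemma cell_subset_region (s : List Bool) : cell A s ⊆ region A s := inter_subset_right

lemma region_cons_subset (b : Bool) (s : List Bool) : region A (b :: s) ⊆ region A s := by
  cases b
  · exact sdiff_subset
  · exact sdiff_subset.trans inter_subset_left

lemma region_append_subset (u s : List Bool) : region A (u ++ s) ⊆ region A s := by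
  induction u with
  | nil => rfl
  | cons b u ih => exact (region_cons_subset A b (u ++ s)).trans ih

lemma region_true_cons_subset (s : List Bool) :
    region A (true :: s) ⊆ closure (cell A s) \ cell A s :=
  sdiff_subset_sdiff_left inter_subset_right

lemma cell_append_true_cons_subset (u s : List Bool) :
    cell A (u ++ true :: s) ⊆ closure (cell A s) \ cell A s :=
  (cell_subset_region A _).trans <|
    (region_append_subset A u _).trans (region_true_cons_subset A s)

lemma eq_of_mem_region {s t : List Bool} (hlen : s.length = t.length) {x : X}
    (hs : x ∈ region A s) (ht : x ∈ region A t) : s = t := by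
  induction s generalizing t with
  | nil => exact (List.length_eq_zero_iff.1 hlen.symm).symm
  | cons b s ih =>
    obtain _ | ⟨c, t⟩ := t
    · simp at hlen
    obtain rfl := ih (by simpa using hlen) (region_cons_subset A b s hs)
      (region_cons_subset A c t ht)
    cases b <;> cases c
    · rfl
    · exact absurd (region_true_cons_subset A s ht).1 hs.2
    · exact absurd (region_true_cons_subset A s hs).1 ht.2
    · rfl

lemma pairwise_disjoint_cell (hdisj : Pairwise (Disjoint on A)) :
    Pairwise (Disjoint on cell A) := by
  intro s t hst
  rw [onFun, disjoint_left]
  intro x hs ht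
  rcases eq_or_ne s.length t.length with hlen | hlen
  · exact hst (eq_of_mem_region A hlen hs.2 ht.2)
  · exact disjoint_left.1 (hdisj hlen) hs.1 ht.1

lemma exists_mem_cell_or_mem_region (x : X) (n : ℕ) :
    (∃ t, x ∈ cell A t) ∨ ∃ s : List Bool, s.length = n ∧ x ∈ region A s := by
  induction n with
  | zero => exact Or.inr ⟨[], rfl, trivial⟩
  | succ n ih =>
    obtain h | ⟨s, rfl, hs⟩ := ih
    · exact Or.inl h
    by_cases hcell : x ∈ cell A s
    · exact Or.inl ⟨s, hcell⟩
    by_cases hcl : x ∈ closure (cell A s)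
    · exact Or.inr ⟨true :: s, rfl, ⟨hs, hcl⟩, hcell⟩
    · exact Or.inr ⟨false :: s, rfl, hs, hcl⟩

lemma iUnion_cell (hcover : ⋃ i, A i = univ) : ⋃ s, cell A s = univ := by
  refine eq_univ_of_forall fun x => mem_iUnion.2 ?_
  obtain ⟨n, hn⟩ := mem_iUnion.1 (hcover.symm ▸ mem_univ x : x ∈ ⋃ i, A i)
  obtain h | ⟨s, rfl, hs⟩ := exists_mem_cell_or_mem_region A x n
  · exact h
  · exact ⟨s, hn, hs⟩

def history : List Bool → Set X
  | [] => ∅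
  | true :: s => history s
  | false :: s => closure (cell A s) ∪ history s

lemma isClosed_history : ∀ s : List Bool, IsClosed (history A s)
  | [] => isClosed_empty
  | true :: s => isClosed_history s
  | false :: s => isClosed_closure.union (isClosed_history s)

lemma disjoint_history_region : ∀ s : List Bool, Disjoint (history A s) (region A s)
  | [] => empty_disjoint _
  | true :: s => (disjoint_history_region s).mono_right (region_cons_subset A true s)
  | false :: s => disjoint_union_left.2
      ⟨disjoint_sdiff_right, (disjoint_history_region s).mono_right sdiff_subset⟩

lemma exists_eq_append_true_cons_or_cell_subset_history :
    ∀ s t : List Bool, nodeKey t < nodeKey s →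
      (∃ u, t = u ++ true :: s) ∨ cell A t ⊆ history A s
  | [], t, h => Or.inl (exists_eq_append_true_of_nodeKey_lt_nil h)
  | false :: q, t, h => by
    rcases nodeKey_lt_false_cons h with ⟨u, rfl⟩ | rfl | hlt
    · exact Or.inl ⟨u, rfl⟩
    · exact Or.inr (subset_closure.trans subset_union_left)
    rcases exists_eq_append_true_cons_or_cell_subset_history q t hlt with ⟨u, rfl⟩ | hsub
    · exact Or.inr <| ((cell_append_true_cons_subset A u q).trans sdiff_subset).trans
        subset_union_left
    · exact Or.inr (hsub.trans subset_union_right)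
  | true :: q, t, h => by
    rcases nodeKey_lt_true_cons h with ⟨u, rfl⟩ | hlt
    · exact Or.inl ⟨u, rfl⟩
    rcases exists_eq_append_true_cons_or_cell_subset_history q t hlt with ⟨u, rfl⟩ | hsub
    -- `t` lies in the closed subtree of `q` but before `true :: q`, so it is below `true :: q`.
    · rcases List.eq_nil_or_concat u with rfl | ⟨u, c, rfl⟩
      · exact absurd h (lt_irrefl _)
      cases c
      · exact absurd h (by simpa using not_nodeKey_append_false_cons_lt u (true :: q))
      · exact Or.inl ⟨u, by simp⟩
    · exact Or.inr hsub

section LocallyClosed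

variable {A} (hlc : ∀ i, IsLocallyClosed (A i))
include hlc

lemma isLocallyClosed_region : ∀ s : List Bool, IsLocallyClosed (region A s)
  | [] => isOpen_univ.isLocallyClosed
  | b :: s => by
    have hcell : IsLocallyClosed (cell A s) := (hlc s.length).inter (isLocallyClosed_region s)
    cases b
    · rw [region_false_cons, sdiff_eq]
      exact (isLocallyClosed_region s).inter isClosed_closure.isOpen_compl.isLocallyClosed
    · rw [region_true_cons, inter_sdiff_assoc]
      exact (isLocallyClosed_region s).inter hcell.isClosed_closure_sdiff.isLocallyClosed

lemma isLocallyClosed_cell (s : List Bool) : IsLocallyClosed (cell A s) :=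
  (hlc s.length).inter (isLocallyClosed_region hlc s)

lemma disjoint_cell_closure_iUnion_nodeKey_lt (s : List Bool) :
    Disjoint (cell A s) (closure (⋃ t ∈ {t | nodeKey t < nodeKey s}, cell A t)) := by
  set F := (closure (cell A s) \ cell A s) ∪ history A s
  have hF : IsClosed F :=
    (isLocallyClosed_cell hlc s).isClosed_closure_sdiff.union (isClosed_history A s)
  have hsub : (⋃ t ∈ {t | nodeKey t < nodeKey s}, cell A t) ⊆ F := by
    refine iUnion₂_subset fun t ht => ?_
    rcases exists_eq_append_true_cons_or_cell_subset_history A s t ht with ⟨u, rfl⟩ | hsub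
    · exact (cell_append_true_cons_subset A u s).trans subset_union_left
    · exact hsub.trans subset_union_right
  refine Disjoint.mono_right (hF.closure_subset_iff.2 hsub) (disjoint_union_right.2 ⟨?_, ?_⟩)
  · exact disjoint_sdiff_right
  · exact ((disjoint_history_region A s).mono_right (cell_subset_region A s)).symm

end LocallyClosed

end Tree

end LinearSeparation

open LinearSeparation in
theorem stmt_17 {X : Type*} [TopologicalSpace X] (A : ℕ → Set X)
    (hlc : ∀ i, IsLocallyClosed (A i))
    (hdisj : Pairwise (Function.onFun Disjoint A))
    (hcover : (⋃ i, A i) = Set.univ) :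
    ∃ B : ℕ → Set X, (∀ i, IsLocallyClosed (B i)) ∧
      Pairwise (Function.onFun Disjoint B) ∧
      (⋃ i, B i) = Set.univ ∧
      (∀ i, ∃ k, B i ⊆ A k) ∧
      ∃ le : ℕ → ℕ → Prop, IsLinearOrder ℕ le ∧
        ∀ i, B i ∩ closure (⋃ j ∈ {j | le j i ∧ j ≠ i}, B j) = ∅ := by
  let _ : Denumerable (List Bool) := Denumerable.ofEncodableOfInfinite _
  let p : ℕ ≃ List Bool := (Denumerable.eqv (List Bool)).symm
  have hkey : Function.Injective (nodeKey ∘ p) := nodeKey_injective.comp p.injective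
  refine ⟨cell A ∘ p, fun i => isLocallyClosed_cell hlc (p i),
    (pairwise_disjoint_cell A hdisj).comp_of_injective p.injective,
    by rw [← iUnion_cell A hcover]; exact p.surjective.iUnion_comp (cell A),
    fun i => ⟨(p i).length, inter_subset_left⟩, (· ≤ ·) on (nodeKey ∘ p),
    hkey.isLinearOrder_onFun (r := (· ≤ ·)), fun i => disjoint_iff_inter_eq_empty.1 ?_⟩
  refine (disjoint_cell_closure_iUnion_nodeKey_lt hlc (p i)).mono_right (closure_mono ?_)
  exact iUnion₂_subset fun j ⟨hle, hne⟩ =>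
    subset_biUnion_of_mem (u := cell A) (lt_of_le_of_ne hle (hne ∘ (hkey ·)))
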